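/- arXiv:1905.10287 — 2 statements merged into one kernel-verified Lean document; each statement's English description precedes it below -/
import Mathlib

section
/- Let Φ = Ω or Φ = Γ and let X be an infinite Hausdorff topological space. The following are equivalent: (a) USC*_p(X) satisfies the selection principle S₁(Φ̃↑, 𝒟), i.e., S₁(Φ̃↑(USC*_p(X)), 𝒟(USC*_p(X))); (b) USC*_p(X) is separable and X is an S₁(Φ,Ω)-space; (c) USC*_p(X) is separable and satisfies S₁(Φ_h,Ω_h) for every h ∈ USC*_p(X); (d) USC*_p(X) is separable and satisfies S₁(Φ̃↑,Ω_h) for every h ∈ USC*_p(X). -/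
open Set Filter Topology

namespace Selectors

variable {X : Type*}

/-- Kinds of covers / of pointwise properties: `o` (ordinary covers / 𝒪),
`omega` (ω-covers / Ω), `gamma` (γ-covers / Γ). -/
inductive CoverKind : Type
  | o | omega | gamma

/-- `f` is a bounded upper semicontinuous real function on `X`. -/
def IsUSCb [TopologicalSpace X] (f : X → ℝ) : Prop :=
  (∀ a : ℝ, IsOpen {x | f x < a}) ∧ ∃ M : ℝ, ∀ x, |f x| ≤ M

/-- `USC*_p(X)`: the set of bounded upper semicontinuous real functions on `X`,
regarded as a subset of `X → ℝ` with the product (pointwise convergence) topology. -/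
def USCb (X : Type*) [TopologicalSpace X] : Set (X → ℝ) := {f | IsUSCb f}

/-- `C*_p(X)`: the set of bounded continuous real functions on `X`. -/
def Cb (X : Type*) [TopologicalSpace X] : Set (X → ℝ) :=
  {f | Continuous f ∧ ∃ M : ℝ, ∀ x, |f x| ≤ M}

/-- `𝒰` is a cover of `X`. -/
def IsCover (𝒰 : Set (Set X)) : Prop := ∀ x : X, ∃ U ∈ 𝒰, x ∈ U

/-- The (not necessarily open) cover condition of the given kind:
an `o`-cover is a cover; an ω-cover is a cover not containing `X` such that every
finite subset of `X` is contained in a member; a γ-cover is an infinite cover such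
that each point belongs to all but finitely many members. -/
def kindSets (k : CoverKind) (𝒰 : Set (Set X)) : Prop :=
  match k with
  | .o => IsCover 𝒰
  | .omega => IsCover 𝒰 ∧ Set.univ ∉ 𝒰 ∧ ∀ F : Set X, F.Finite → ∃ U ∈ 𝒰, F ⊆ U
  | .gamma => IsCover 𝒰 ∧ 𝒰.Infinite ∧ ∀ x : X, {U ∈ 𝒰 | x ∉ U}.Finite

/-- The family `𝒪(X)`, `Ω(X)` or `Γ(X)` of open covers/ω-covers/γ-covers of `X`. -/
def OpenKindCovers (X : Type*) [TopologicalSpace X] (k : CoverKind) : Set (Set (Set X)) :=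
  {𝒰 | (∀ U ∈ 𝒰, IsOpen U) ∧ kindSets k 𝒰}

/-- The selection principle `S₁(A, B)`. -/
def S1 {α : Type*} (A B : Set (Set α)) : Prop :=
  ∀ u : ℕ → Set α, (∀ n, u n ∈ A) →
    ∃ sel : ℕ → α, (∀ n, sel n ∈ u n) ∧ Set.range sel ∈ B

/-- The selection principle `S_fin(A, B)`. -/
def Sfin {α : Type*} (A B : Set (Set α)) : Prop :=
  ∀ u : ℕ → Set α, (∀ n, u n ∈ A) →
    ∃ V : ℕ → Set α, (∀ n, V n ⊆ u n ∧ (V n).Finite) ∧ (⋃ n, V n) ∈ B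

/-- Property `(𝒪_h)` of a family `F` of real functions. -/
def PropO (h : X → ℝ) (F : Set (X → ℝ)) : Prop :=
  ∀ x : X, h x ∈ closure ((fun f : X → ℝ => f x) '' F)

/-- Property `(Ω_h)`: `h ∉ F` and `h` belongs to the closure of `F` in `ℝ^X`. -/
def PropOmega (h : X → ℝ) (F : Set (X → ℝ)) : Prop :=
  h ∉ F ∧ h ∈ closure F

/-- Property `(Γ_h)`. -/
def PropGamma (h : X → ℝ) (F : Set (X → ℝ)) : Prop :=
  F.Infinite ∧ ∀ ε : ℝ, 0 < ε → ∀ x : X, {f ∈ F | ε ≤ |f x - h x|}.Finite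

/-- Property `(Φ_h)` for `Φ = 𝒪, Ω, Γ`. -/
def kindProp (k : CoverKind) (h : X → ℝ) (F : Set (X → ℝ)) : Prop :=
  match k with
  | .o => PropO h F
  | .omega => PropOmega h F
  | .gamma => PropGamma h F

/-- The family `Φ_h(H) = {F ⊆ H : F has (Φ_h) and ∀ f ∈ F, f ≥ h ∧ f - h ∈ H}`. -/
def PhiH (k : CoverKind) (h : X → ℝ) (H : Set (X → ℝ)) : Set (Set (X → ℝ)) :=
  {F | F ⊆ H ∧ kindProp k h F ∧ ∀ f ∈ F, h ≤ f ∧ f - h ∈ H}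

/-- `F ⊆ H` is sequentially dense in `H` (with respect to pointwise convergence). -/
def SeqDenseIn (F H : Set (X → ℝ)) : Prop :=
  F ⊆ H ∧ ∀ f ∈ H, ∃ u : ℕ → (X → ℝ), (∀ n, u n ∈ F) ∧
    Filter.Tendsto u Filter.atTop (nhds f)

/-- `F ⊆ H` is dense in `H`. -/
def DenseIn (F H : Set (X → ℝ)) : Prop :=
  F ⊆ H ∧ H ⊆ closure F

/-- `F` is pointwise dense: `{f x : f ∈ F}` is dense in `ℝ` for every `x`. -/
def PointwiseDense (F : Set (X → ℝ)) : Prop :=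
  ∀ x : X, Dense {y : ℝ | ∃ f ∈ F, f x = y}

/-- `F ⊆ H` is upper sequentially dense in `H`. -/
def UpperSeqDenseIn (F H : Set (X → ℝ)) : Prop :=
  F ⊆ H ∧ ∀ f ∈ H, ∃ u : ℕ → (X → ℝ),
    (∀ n, u n ∈ F ∧ f ≤ u n ∧ u n - f ∈ H) ∧
    Filter.Tendsto u Filter.atTop (nhds f)

/-- `F ⊆ H` is upper dense in `H`: for every `f ∈ H` the set
`{h ∈ F : h ≥ f ∧ h - f ∈ H}` is dense in `{h ∈ H : h ≥ f}`. -/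
def UpperDenseIn (F H : Set (X → ℝ)) : Prop :=
  F ⊆ H ∧ ∀ f ∈ H, {g | g ∈ H ∧ f ≤ g} ⊆ closure {g | g ∈ F ∧ f ≤ g ∧ g - f ∈ H}

/-- `𝒮(H)`: the family of sequentially dense subsets of `H`. -/
def Sfam (H : Set (X → ℝ)) : Set (Set (X → ℝ)) := {F | SeqDenseIn F H}

/-- `𝒟(H)`: the family of dense subsets of `H`. -/
def Dfam (H : Set (X → ℝ)) : Set (Set (X → ℝ)) := {F | DenseIn F H}

/-- `𝒫(H)`: the family of pointwise dense subsets of `H`. -/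
def Pfam (H : Set (X → ℝ)) : Set (Set (X → ℝ)) := {F | F ⊆ H ∧ PointwiseDense F}

/-- `Φ̃↑(H)`: for `Φ = Γ` the upper sequentially dense subsets, for `Φ = Ω`
the upper dense subsets, for `Φ = 𝒪` the pointwise dense subsets of `H`. -/
def upTilde (k : CoverKind) (H : Set (X → ℝ)) : Set (Set (X → ℝ)) :=
  match k with
  | .o => Pfam H
  | .omega => {F | UpperDenseIn F H}
  | .gamma => {F | UpperSeqDenseIn F H}

/-- `H` is separable: it has a countable dense subset. -/
def SeparableSet (H : Set (X → ℝ)) : Prop := ∃ D, D.Countable ∧ DenseIn D H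

/-- `H` is sequentially separable: it has a countable sequentially dense subset. -/
def SeqSeparableSet (H : Set (X → ℝ)) : Prop := ∃ D, D.Countable ∧ SeqDenseIn D H

/-- Property `(ε)`: every open ω-cover contains a countable ω-subcover. -/
def PropEps (X : Type*) [TopologicalSpace X] : Prop :=
  ∀ 𝒰 : Set (Set X), 𝒰 ∈ OpenKindCovers X CoverKind.omega →
    ∃ 𝒱 ⊆ 𝒰, 𝒱.Countable ∧ 𝒱 ∈ OpenKindCovers X CoverKind.omega

/-- `S` is an `F_σ` set with respect to the topology `t`. -/
def IsFsigmaIn (t : TopologicalSpace X) (S : Set X) : Prop :=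
  ∃ C : ℕ → Set X, (∀ n, IsClosed[t] (C n)) ∧ S = ⋃ n, C n

/-- `S` is locally closed with respect to `t`: an intersection of a `t`-open
and a `t`-closed set. -/
def IsLocallyClosedIn (t : TopologicalSpace X) (S : Set X) : Prop :=
  ∃ U F : Set X, IsOpen[t] U ∧ IsClosed[t] F ∧ S = U ∩ F

/-- `S` is a cozero set with respect to `t`. -/
def IsCozeroIn (t : TopologicalSpace X) (S : Set X) : Prop :=
  ∃ f : X → ℝ, @Continuous X ℝ t inferInstance f ∧ S = {x | f x ≠ 0}

/-- The `OB`-property of `⟨X, t⟩`: there is a separable metrizable topology `t'`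
on `X` weaker than `t` such that every locally closed subset of `⟨X, t⟩` is an
`F_σ`-set in `t'`. -/
def OBProperty (X : Type*) [t : TopologicalSpace X] : Prop :=
  ∃ t' : TopologicalSpace X,
    (∀ s : Set X, IsOpen[t'] s → IsOpen[t] s) ∧
    @TopologicalSpace.MetrizableSpace X t' ∧
    @TopologicalSpace.SeparableSpace X t' ∧
    ∀ S : Set X, IsLocallyClosedIn t S → IsFsigmaIn t' S

/-- The `V`-property of `⟨X, t⟩`: there is a separable metrizable topology `t'`
on `X` weaker than `t` such that every cozero subset of `⟨X, t⟩` is an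
`F_σ`-set in `t'`. -/
def VProperty (X : Type*) [t : TopologicalSpace X] : Prop :=
  ∃ t' : TopologicalSpace X,
    (∀ s : Set X, IsOpen[t'] s → IsOpen[t] s) ∧
    @TopologicalSpace.MetrizableSpace X t' ∧
    @TopologicalSpace.SeparableSpace X t' ∧
    ∀ S : Set X, IsCozeroIn t S → IsFsigmaIn t' S

/-- `iw(X) = ℵ₀`: `X` can be mapped by a one-to-one continuous map onto a
Tychonoff space of countable weight. -/
def IWCountable (X : Type*) [TopologicalSpace X] : Prop :=
  ∃ (Y : Type) (tY : TopologicalSpace Y) (f : X → Y),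
    @Continuous X Y _ tY f ∧ Function.Bijective f ∧
    @T35Space Y tY ∧ @SecondCountableTopology Y tY

/-- `Φ^sh(X)`: the family of open shrinkable φ-covers of `X`. -/
def ShFam (X : Type*) [TopologicalSpace X] (k : CoverKind) : Set (Set (Set X)) :=
  {𝒰 | 𝒰 ∈ OpenKindCovers X k ∧
    ∃ 𝒲 ∈ OpenKindCovers X k, ∀ W ∈ 𝒲, ∃ U ∈ 𝒰, closure W ⊆ U}

/-- A zero set. -/
def IsZeroSet [TopologicalSpace X] (S : Set X) : Prop :=
  ∃ f : X → ℝ, Continuous f ∧ S = {x | f x = 0}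

/-- A cozero set. -/
def IsCozeroSet [TopologicalSpace X] (S : Set X) : Prop :=
  ∃ f : X → ℝ, Continuous f ∧ S = {x | f x ≠ 0}

/-- `Φ^fsh_cz(X)`: the family of functionally shrinkable φ-covers of `X`
consisting of cozero sets. -/
def FshCzFam (X : Type*) [TopologicalSpace X] (k : CoverKind) : Set (Set (Set X)) :=
  {𝒰 | (∀ U ∈ 𝒰, IsCozeroSet U) ∧ kindSets k 𝒰 ∧
    ∃ 𝒲 : Set (Set X), (∀ W ∈ 𝒲, IsZeroSet W) ∧ kindSets k 𝒲 ∧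
      ∀ W ∈ 𝒲, ∃ U ∈ 𝒰, closure W ⊆ U}

/-- The function `f_{U,g}`: equal to `0` on `U` and to `1 + sup |g|` off `U`. -/
noncomputable def fU (U : Set X) (g : X → ℝ) : X → ℝ :=
  Uᶜ.indicator fun _ => 1 + ⨆ y, |g y|

/-- The family `S(𝒰) = {f_{U,g} + g : U ∈ 𝒰, g ∈ USC*_p(X)}`. -/
def SU [TopologicalSpace X] (𝒰 : Set (Set X)) : Set (X → ℝ) :=
  {f | ∃ U ∈ 𝒰, ∃ g ∈ USCb X, f = fU U g + g}

/-- The Sorgenfrey topology on `ℝ`, generated by the half-open intervals `[a, b)`. -/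
def sorgenfreyTop : TopologicalSpace ℝ :=
  TopologicalSpace.generateFrom {s | ∃ a b : ℝ, s = Set.Ico a b}

/-- The Sorgenfrey plane topology on `ℝ × ℝ`. -/
def sorgenfreyPlaneTop : TopologicalSpace (ℝ × ℝ) :=
  @instTopologicalSpaceProd ℝ ℝ sorgenfreyTop sorgenfreyTop


/-!
The functions `f_{U,g}` turn covers into families of functions: a sequence of them accumulates
at `0` only if the corresponding open sets form an ω-cover, because `f_{U,g} + g ≥ 1` off `U`;
this gives (a) ⇒ (b) and (c) ⇒ (b). Conversely, for a family of functions `g ≥ h`, the sets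
`{x : g x - h x < δ}` form a Φ-cover unless some member is already uniformly `δ`-close to `h`.
Applying `S₁(Φ, Ω)` to these covers for `δ = 1/(m+1)` and diagonalizing along the pairing
`ℕ × ℕ ≃ ℕ` selects a sequence accumulating at `h`, which gives (b) ⇒ (c) and (b) ⇒ (d).
Finally (d) ⇒ (a) diagonalizes over a countable dense subset of `USC*_p(X)`.
-/

theorem mem_closure_iff_forall_finite {S : Set (X → ℝ)} {h : X → ℝ} :
    h ∈ closure S ↔ ∀ K : Set X, K.Finite → ∀ ε > 0, ∃ f ∈ S, ∀ x ∈ K, |f x - h x| < ε := by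
  constructor
  · intro hcl K hK ε hε
    have hnhds : {g : X → ℝ | ∀ x ∈ K, |g x - h x| < ε} ∈ 𝓝 h :=
      (eventually_all_finite hK).2 fun x _ =>
        ((continuous_apply x).tendsto h).eventually (Metric.ball_mem_nhds (h x) hε)
    obtain ⟨f, hfK, hfS⟩ := mem_closure_iff_nhds.1 hcl _ hnhds
    exact ⟨f, hfS, hfK⟩
  · intro H
    refine mem_closure_iff_nhds.2 fun U hU => ?_
    rw [nhds_pi, Filter.mem_pi] at hU
    obtain ⟨I, hI, t, ht, hIt⟩ := hU
    have hsmall : ∀ᶠ ε in 𝓝[>] (0 : ℝ), ∀ x ∈ I, Metric.ball (h x) ε ⊆ t x := by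
      refine (eventually_all_finite hI).2 fun x _ => ?_
      obtain ⟨r, hr, hrt⟩ := Metric.mem_nhds_iff.1 (ht x)
      filter_upwards [Ioo_mem_nhdsGT hr] with ε hε
      exact (Metric.ball_subset_ball hε.2.le).trans hrt
    obtain ⟨ε, hεt, hε⟩ := (hsmall.and self_mem_nhdsWithin).exists
    obtain ⟨f, hfS, hf⟩ := H I hI ε hε
    exact ⟨f, hIt fun x hx => hεt x hx (hf x hx), hfS⟩

theorem _root_.Set.Infinite.exists_seq_eventually {α β : Type*} {s : Set α} (hs : s.Infinite)
    {P : α → β → Prop} (hfin : ∀ b, {a ∈ s | ¬P a b}.Finite) :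
    ∃ e : ℕ → α, (∀ j, e j ∈ s) ∧ ∀ b, ∀ᶠ j in atTop, P (e j) b := by
  have hinj : Function.Injective fun j => (hs.natEmbedding s j : α) :=
    Subtype.val_injective.comp (hs.natEmbedding s).injective
  refine ⟨fun j => hs.natEmbedding s j, fun j => (hs.natEmbedding s j).2, fun b => ?_⟩
  rw [← Nat.cofinite_eq_atTop]
  filter_upwards [hinj.tendsto_cofinite.eventually (hfin b).compl_mem_cofinite] with j hj
  by_contra hP
  exact hj ⟨(hs.natEmbedding s j).2, hP⟩

theorem exists_seq_forall_exists_subset_range {α : Type*} {S : ℕ → Set α}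
    {P : ℕ → Set α → Prop} (hP : ∀ m, ∃ f : ℕ → α, (∀ k, f k ∈ S (Nat.pair m k)) ∧ P m (range f)) :
    ∃ f : ℕ → α, (∀ n, f n ∈ S n) ∧ ∀ m, ∃ A ⊆ range f, P m A := by
  choose F hFS hFP using hP
  refine ⟨fun n => F n.unpair.1 n.unpair.2, fun n => by simpa using hFS n.unpair.1 n.unpair.2,
    fun m => ⟨range (F m), ?_, hFP m⟩⟩
  rintro _ ⟨k, rfl⟩
  exact ⟨Nat.pair m k, by simp⟩

section USC

variable [TopologicalSpace X]

theorem isUSCb_iff {f : X → ℝ} :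
    IsUSCb f ↔ UpperSemicontinuous f ∧ ∃ M, ∀ x, |f x| ≤ M := by
  rw [upperSemicontinuous_iff_isOpen_preimage]
  rfl

theorem const_mem_USCb (c : ℝ) : (fun _ => c : X → ℝ) ∈ USCb X :=
  isUSCb_iff.2 ⟨upperSemicontinuous_const, |c|, fun _ => le_rfl⟩

theorem zero_mem_USCb : (0 : X → ℝ) ∈ USCb X :=
  const_mem_USCb 0

theorem add_mem_USCb {f g : X → ℝ} (hf : f ∈ USCb X) (hg : g ∈ USCb X) : f + g ∈ USCb X := by
  obtain ⟨hf, M, hM⟩ := isUSCb_iff.1 hf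
  obtain ⟨hg, N, hN⟩ := isUSCb_iff.1 hg
  exact isUSCb_iff.2 ⟨hf.add hg, M + N, fun x => (abs_add_le _ _).trans (add_le_add (hM x) (hN x))⟩

theorem indicator_const_mem_USCb {C : Set X} (hC : IsClosed C) {c : ℝ} (hc : 0 ≤ c) :
    C.indicator (fun _ => c) ∈ USCb X :=
  isUSCb_iff.2 ⟨hC.upperSemicontinuous_indicator hc, c, fun x => by
    rcases C.indicator_eq_zero_or_self (fun _ => c) x with h | h <;> simp [h, abs_of_nonneg hc, hc]⟩

theorem indicator_mem_USCb_of_finite [T1Space X] {K : Set X} (hK : K.Finite) {c : X → ℝ}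
    (hc : ∀ x ∈ K, 0 ≤ c x) : K.indicator c ∈ USCb X := by
  have hnn : ∀ x, 0 ≤ K.indicator c x := Set.indicator_nonneg hc
  refine isUSCb_iff.2 ⟨fun x y hy => ?_, ?_⟩
  · filter_upwards [(hK.sdiff (t := {x})).isClosed.isOpen_compl.mem_nhds (by simp)]
      with x' hx'
    by_cases hxx' : x' = x
    · rwa [hxx']
    · rw [Set.indicator_of_notMem fun hx'K => hx' ⟨hx'K, hxx'⟩]
      exact (hnn x).trans_lt hy
  · obtain ⟨M, hM⟩ := (hK.image c).bddAbove
    refine ⟨max M 0, fun x => ?_⟩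
    rw [abs_of_nonneg (hnn x)]
    by_cases hx : x ∈ K
    · rw [Set.indicator_of_mem hx]
      exact le_max_of_le_left (hM ⟨x, hx, rfl⟩)
    · rw [Set.indicator_of_notMem hx]
      exact le_max_right M 0

theorem exists_mem_USCb_above_eqOn [T1Space X] {f g₀ : X → ℝ} (hf : f ∈ USCb X) {K : Set X}
    (hK : K.Finite) (hfg : ∀ x ∈ K, f x ≤ g₀ x) :
    ∃ g ∈ USCb X, f ≤ g ∧ g - f ∈ USCb X ∧ EqOn g g₀ K := by
  have hc : ∀ x ∈ K, 0 ≤ (g₀ - f) x := fun x hx => sub_nonneg.2 (hfg x hx)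
  have hs := indicator_mem_USCb_of_finite hK hc
  refine ⟨f + K.indicator (g₀ - f), add_mem_USCb hf hs,
    le_add_of_nonneg_right (Set.indicator_nonneg hc), by rwa [add_sub_cancel_left],
    fun x hx => ?_⟩
  simp [Set.indicator_of_mem hx]

end USC

section fU

theorem one_add_iSup_abs_nonneg (g : X → ℝ) : 0 ≤ 1 + ⨆ y, |g y| :=
  add_nonneg zero_le_one (Real.iSup_nonneg fun _ => abs_nonneg _)

theorem fU_nonneg (U : Set X) (g : X → ℝ) : 0 ≤ fU U g :=
  Set.indicator_nonneg fun _ _ => one_add_iSup_abs_nonneg g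

theorem fU_of_mem {U : Set X} {x : X} (hx : x ∈ U) (g : X → ℝ) : fU U g x = 0 :=
  Set.indicator_of_notMem (not_not.2 hx) _

theorem fU_zero_eq_zero_iff {U : Set X} {x : X} : fU U 0 x = 0 ↔ x ∈ U := by
  simp [fU]

variable [TopologicalSpace X]

theorem fU_mem_USCb {U : Set X} (hU : IsOpen U) (g : X → ℝ) : fU U g ∈ USCb X :=
  indicator_const_mem_USCb hU.isClosed_compl (one_add_iSup_abs_nonneg g)

theorem one_le_fU_add {U : Set X} {x : X} (hx : x ∉ U) {g : X → ℝ} (hg : g ∈ USCb X) :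
    1 ≤ fU U g x + g x := by
  obtain ⟨-, M, hM⟩ := hg
  have hsup : |g x| ≤ ⨆ y, |g y| := le_ciSup ⟨M, forall_mem_range.2 hM⟩ x
  rw [fU, Set.indicator_of_mem hx]
  linarith [neg_le_abs (g x)]

end fU

section Covers

theorem kindSets_gamma_of_finite {𝒰 : Set (Set X)} (hinf : 𝒰.Infinite)
    (hfin : ∀ x, {U ∈ 𝒰 | x ∉ U}.Finite) : kindSets .gamma 𝒰 := by
  refine ⟨fun x => ?_, hinf, hfin⟩
  obtain ⟨U, hU, hxU⟩ := (hinf.sdiff (hfin x)).nonempty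
  exact ⟨U, hU, by_contra fun h => hxU ⟨hU, h⟩⟩

variable [TopologicalSpace X]

theorem mem_omega_of_forall_finite {𝒰 : Set (Set X)} (hopen : ∀ U ∈ 𝒰, IsOpen U)
    (huniv : univ ∉ 𝒰) (hfin : ∀ F : Set X, F.Finite → ∃ U ∈ 𝒰, F ⊆ U) :
    𝒰 ∈ OpenKindCovers X .omega :=
  ⟨hopen, fun x => (hfin {x} (finite_singleton x)).imp fun _ hU => ⟨hU.1, hU.2 rfl⟩, huniv, hfin⟩

theorem range_mem_gamma {W : ℕ → Set X} (hopen : ∀ j, IsOpen (W j)) (huniv : ∀ j, W j ≠ univ)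
    (hev : ∀ x, ∀ᶠ j in atTop, x ∈ W j) : range W ∈ OpenKindCovers X .gamma := by
  refine ⟨forall_mem_range.2 hopen, kindSets_gamma_of_finite (fun hW => ?_) fun x => ?_⟩
  · -- pick a point outside each member; eventually `W j` contains all of them,
    -- in particular the one picked outside `W j`
    obtain ⟨x₀, -⟩ := (ne_univ_iff_exists_notMem _).1 (huniv 0)
    have : Nonempty X := ⟨x₀⟩
    choose! p hp using fun U (hU : U ∈ range W) => (ne_univ_iff_exists_notMem U).1 (by
      obtain ⟨j, rfl⟩ := hU; exact huniv j)
    obtain ⟨j, hj⟩ := ((eventually_all_finite (hW.image p)).2 fun x _ => hev x).exists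
    exact hp (W j) (mem_range_self j) (hj _ (mem_image_of_mem p (mem_range_self j)))
  · have hfin : {j | x ∉ W j}.Finite := by
      simpa [← Nat.cofinite_eq_atTop] using hev x
    refine (hfin.image W).subset ?_
    rintro _ ⟨⟨j, rfl⟩, hx⟩
    exact ⟨j, hx, rfl⟩

theorem diff_univ_mem_openKindCovers {Φ : CoverKind}
    (hΦ : Φ = CoverKind.omega ∨ Φ = CoverKind.gamma) {𝒰 : Set (Set X)}
    (h𝒰 : 𝒰 ∈ OpenKindCovers X Φ) : 𝒰 \ {univ} ∈ OpenKindCovers X Φ := by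
  rcases hΦ with rfl | rfl
  · rwa [sdiff_singleton_eq_self h𝒰.2.2.1]
  · obtain ⟨hopen, -, hinf, hfin⟩ := h𝒰
    exact ⟨fun U hU => hopen U hU.1, kindSets_gamma_of_finite (hinf.sdiff (finite_singleton _))
      fun x => (hfin x).subset fun U hU => ⟨hU.1.1, hU.2⟩⟩

theorem range_mem_omega_of_zero_mem_closure {U : ℕ → Set X} {g : ℕ → X → ℝ}
    (hU : ∀ n, IsOpen (U n)) (huniv : ∀ n, U n ≠ univ) (hg : ∀ n, g n ∈ USCb X)
    (h0 : (0 : X → ℝ) ∈ closure (range fun n => fU (U n) (g n) + g n)) :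
    range U ∈ OpenKindCovers X .omega := by
  refine mem_omega_of_forall_finite (forall_mem_range.2 hU) (fun ⟨n, hn⟩ => huniv n hn)
    fun K hK => ?_
  obtain ⟨_, ⟨n, rfl⟩, hn⟩ := mem_closure_iff_forall_finite.1 h0 K hK 1 one_pos
  refine ⟨U n, mem_range_self n, fun x hx => by_contra fun hxU => ?_⟩
  have hlt := (abs_lt.1 (hn x hx)).2
  simp only [Pi.add_apply, Pi.zero_apply, sub_zero] at hlt
  linarith [one_le_fU_add hxU (hg n)]

end Covers

section Density

theorem upTilde_subset {k : CoverKind} {F H : Set (X → ℝ)} (hF : F ∈ upTilde k H) : F ⊆ H := by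
  cases k <;> exact hF.1

theorem upperDenseIn_of_forall_finite {F H : Set (X → ℝ)} (hFH : F ⊆ H)
    (happrox : ∀ f ∈ H, ∀ g₀, f ≤ g₀ → ∀ K : Set X, K.Finite →
      ∃ g ∈ F, f ≤ g ∧ g - f ∈ H ∧ EqOn g g₀ K) :
    UpperDenseIn F H := by
  refine ⟨hFH, fun f hf g₀ hg₀ => mem_closure_iff_forall_finite.2 fun K hK ε hε => ?_⟩
  obtain ⟨g, hgF, hfg, hgf, hgK⟩ := happrox f hf g₀ hg₀.2 K hK
  exact ⟨g, ⟨hgF, hfg, hgf⟩, fun x hx => by simpa [hgK hx] using hε⟩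

theorem upperSeqDenseIn_of_forall_tendsto {F H : Set (X → ℝ)} (hFH : F ⊆ H)
    (happrox : ∀ f ∈ H, ∃ s : ℕ → X → ℝ, (∀ j, f + s j ∈ F ∧ 0 ≤ s j ∧ s j ∈ H) ∧
      Tendsto s atTop (𝓝 0)) :
    UpperSeqDenseIn F H := by
  refine ⟨hFH, fun f hf => ?_⟩
  obtain ⟨s, hs, hlim⟩ := happrox f hf
  refine ⟨fun j => f + s j, fun j => ⟨(hs j).1, le_add_of_nonneg_right (hs j).2.1, ?_⟩, ?_⟩
  · simpa using (hs j).2.2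
  · simpa using (tendsto_const_nhds (x := f)).add hlim

variable [TopologicalSpace X]

theorem USCb_mem_upTilde [T1Space X] {Φ : CoverKind}
    (hΦ : Φ = CoverKind.omega ∨ Φ = CoverKind.gamma) : USCb X ∈ upTilde Φ (USCb X) := by
  rcases hΦ with rfl | rfl
  · exact upperDenseIn_of_forall_finite subset_rfl fun f hf g₀ hfg K hK =>
      exists_mem_USCb_above_eqOn hf hK fun x _ => hfg x
  · refine upperSeqDenseIn_of_forall_tendsto subset_rfl fun f hf =>
      ⟨fun j _ => 1 / (j + 1), fun j => ⟨add_mem_USCb hf (const_mem_USCb _),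
        fun _ => by positivity, const_mem_USCb _⟩, ?_⟩
    exact tendsto_pi_nhds.2 fun _ => tendsto_one_div_add_atTop_nhds_zero_nat

theorem SU_mem_upTilde [T1Space X] {Φ : CoverKind}
    (hΦ : Φ = CoverKind.omega ∨ Φ = CoverKind.gamma) {𝒰 : Set (Set X)}
    (h𝒰 : 𝒰 ∈ OpenKindCovers X Φ) : SU 𝒰 ∈ upTilde Φ (USCb X) := by
  have hSU : SU 𝒰 ⊆ USCb X := by
    rintro _ ⟨U, hU, g, hg, rfl⟩
    exact add_mem_USCb (fU_mem_USCb (h𝒰.1 U hU) g) hg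
  rcases hΦ with rfl | rfl
  · refine upperDenseIn_of_forall_finite hSU fun f hf g₀ hfg K hK => ?_
    obtain ⟨U, hU, hKU⟩ := h𝒰.2.2.2 K hK
    obtain ⟨g, hg, hfg', hgf, hgK⟩ := exists_mem_USCb_above_eqOn hf hK fun x _ => hfg x
    refine ⟨fU U g + g, ⟨U, hU, g, hg, rfl⟩, hfg'.trans (le_add_of_nonneg_left (fU_nonneg U g)),
      ?_, fun x hx => ?_⟩
    · rw [add_sub_assoc]
      exact add_mem_USCb (fU_mem_USCb (h𝒰.1 U hU) g) hgf
    · simp [fU_of_mem (hKU hx), hgK hx]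
  · obtain ⟨e, he𝒰, hev⟩ := h𝒰.2.2.1.exists_seq_eventually (P := fun U x => x ∈ U) h𝒰.2.2.2
    refine upperSeqDenseIn_of_forall_tendsto hSU fun f hf => ⟨fun j => fU (e j) f, fun j =>
      ⟨⟨e j, he𝒰 j, f, hf, add_comm _ _⟩, fU_nonneg _ _, fU_mem_USCb (h𝒰.1 _ (he𝒰 j)) f⟩, ?_⟩
    refine tendsto_pi_nhds.2 fun x => tendsto_const_nhds.congr' ?_
    filter_upwards [hev x] with j hj using (fU_of_mem hj f).symm

end Density

section Selection

def nearSets (h : X → ℝ) (δ : ℝ) (F : Set (X → ℝ)) : Set (Set X) :=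
  (fun g => {x | g x - h x < δ}) '' F

variable [TopologicalSpace X]

def NearCoverable (Φ : CoverKind) (h : X → ℝ) (T : Set (X → ℝ)) : Prop :=
  T.Nonempty ∧ ∀ δ > 0, (∀ g ∈ T, ∃ x, δ ≤ g x - h x) →
    ∃ F ⊆ T, nearSets h δ F ∈ OpenKindCovers X Φ

theorem nearSets_mem_omega {h : X → ℝ} {F : Set (X → ℝ)} {δ : ℝ}
    (hsub : ∀ g ∈ F, g - h ∈ USCb X) (hfar : ∀ g ∈ F, ∃ x, δ ≤ g x - h x)
    (hnear : ∀ K : Set X, K.Finite → ∃ g ∈ F, ∀ x ∈ K, g x - h x < δ) :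
    nearSets h δ F ∈ OpenKindCovers X .omega := by
  refine mem_omega_of_forall_finite ?_ ?_ fun K hK => ?_
  · rintro _ ⟨g, hg, rfl⟩
    exact (hsub g hg).1 δ
  · rintro ⟨g, hg, hgU⟩
    obtain ⟨x, hx⟩ := hfar g hg
    have hxU : x ∈ univ := mem_univ x
    rw [← hgU] at hxU
    exact not_lt.2 hx hxU
  · obtain ⟨g, hg, hgK⟩ := hnear K hK
    exact ⟨_, mem_image_of_mem _ hg, hgK⟩

theorem nearSets_range_mem_gamma {h : X → ℝ} {g : ℕ → X → ℝ} {δ : ℝ}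
    (hsub : ∀ j, g j - h ∈ USCb X) (hfar : ∀ j, ∃ x, δ ≤ g j x - h x)
    (hnear : ∀ x, ∀ᶠ j in atTop, g j x - h x < δ) :
    nearSets h δ (range g) ∈ OpenKindCovers X .gamma := by
  rw [nearSets, ← range_comp]
  refine range_mem_gamma (fun j => (hsub j).1 δ) (fun j hj => ?_) hnear
  obtain ⟨x, hx⟩ := hfar j
  have hxU : x ∈ univ := mem_univ x
  rw [← hj] at hxU
  exact not_lt.2 hx hxU

theorem exists_select_forall_finite_sub_lt {Φ : CoverKind}
    (hS1 : S1 (OpenKindCovers X Φ) (OpenKindCovers X .omega)) {h : X → ℝ}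
    {T : ℕ → Set (X → ℝ)} (hT : ∀ n, NearCoverable Φ h (T n)) {δ : ℝ} (hδ : 0 < δ) :
    ∃ f : ℕ → X → ℝ, (∀ n, f n ∈ T n) ∧
      ∀ K : Set X, K.Finite → ∃ n, ∀ x ∈ K, f n x - h x < δ := by
  by_cases hclose : ∃ n, ∃ g ∈ T n, ∀ x, g x - h x < δ
  · obtain ⟨n, g, hg, hgδ⟩ := hclose
    refine ⟨Function.update (fun k => (hT k).1.some) n g, fun k => ?_,
      fun _ _ => ⟨n, fun x _ => by simpa using hgδ x⟩⟩
    rcases eq_or_ne k n with rfl | hk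
    · simpa using hg
    · simpa [hk] using (hT k).1.some_mem
  · push Not at hclose
    choose F hFT hFcov using fun n => (hT n).2 δ hδ (hclose n)
    obtain ⟨U, hUF, hUω⟩ := hS1 _ hFcov
    choose f hfF hfU using hUF
    refine ⟨f, fun n => hFT n (hfF n), fun K hK => ?_⟩
    obtain ⟨_, ⟨n, rfl⟩, hKU⟩ := hUω.2.2.2 K hK
    exact ⟨n, fun x hx => by simpa [← hfU n] using hKU hx⟩

theorem exists_select_mem_closure {Φ : CoverKind}
    (hS1 : S1 (OpenKindCovers X Φ) (OpenKindCovers X .omega)) {h : X → ℝ}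
    {T : ℕ → Set (X → ℝ)} (hle : ∀ n, ∀ g ∈ T n, h ≤ g) (hT : ∀ n, NearCoverable Φ h (T n)) :
    ∃ f : ℕ → X → ℝ, (∀ n, f n ∈ T n) ∧ h ∈ closure (range f) := by
  obtain ⟨f, hfT, hf⟩ := exists_seq_forall_exists_subset_range (S := T)
    (P := fun m A => ∀ K : Set X, K.Finite → ∃ g ∈ A, ∀ x ∈ K, g x - h x < 1 / (m + 1))
    fun m => by
      obtain ⟨f, hfT, hf⟩ :=
        exists_select_forall_finite_sub_lt hS1 (fun k => hT _) (δ := 1 / ((m : ℝ) + 1))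
          Nat.one_div_pos_of_nat
      refine ⟨f, hfT, fun K hK => ?_⟩
      obtain ⟨n, hn⟩ := hf K hK
      exact ⟨f n, mem_range_self n, hn⟩
  refine ⟨f, hfT, mem_closure_iff_forall_finite.2 fun K hK ε hε => ?_⟩
  obtain ⟨m, hm⟩ := exists_nat_one_div_lt hε
  obtain ⟨A, hAf, hA⟩ := hf m
  obtain ⟨g, hgA, hg⟩ := hA K hK
  obtain ⟨n, rfl⟩ := hAf hgA
  refine ⟨f n, mem_range_self n, fun x hx => ?_⟩
  rw [abs_of_nonneg (sub_nonneg.2 (hle n _ (hfT n) x))]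
  exact (hg x hx).trans hm

theorem nearCoverable_diff_of_mem_PhiH {Φ : CoverKind}
    (hΦ : Φ = CoverKind.omega ∨ Φ = CoverKind.gamma) {h : X → ℝ} {F : Set (X → ℝ)}
    (hF : F ∈ PhiH Φ h (USCb X)) : NearCoverable Φ h (F \ {h}) := by
  have hsub : ∀ g ∈ F \ {h}, g - h ∈ USCb X := fun g hg => (hF.2.2 g hg.1).2
  rcases hΦ with rfl | rfl
  · obtain ⟨-, ⟨hhF, hcl⟩, -⟩ := hF
    have hnear : ∀ K : Set X, K.Finite → ∀ δ > 0, ∃ g ∈ F \ {h}, ∀ x ∈ K, g x - h x < δ := by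
      intro K hK δ hδ
      obtain ⟨g, hg, hgK⟩ := mem_closure_iff_forall_finite.1 hcl K hK δ hδ
      exact ⟨g, ⟨hg, fun hgh => hhF (hgh ▸ hg)⟩, fun x hx => (le_abs_self _).trans_lt (hgK x hx)⟩
    obtain ⟨g, hg, -⟩ := hnear ∅ finite_empty 1 one_pos
    exact ⟨⟨g, hg⟩, fun δ hδ hfar =>
      ⟨_, subset_rfl, nearSets_mem_omega hsub hfar fun K hK => hnear K hK δ hδ⟩⟩
  · obtain ⟨-, ⟨hinf, hfin⟩, -⟩ := hF
    have hinf' := hinf.sdiff (finite_singleton h)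
    refine ⟨hinf'.nonempty, fun δ hδ hfar => ?_⟩
    obtain ⟨e, heF, hnear⟩ := hinf'.exists_seq_eventually (P := fun g x => g x - h x < δ)
      fun x => (hfin δ hδ x).subset fun g hg => ⟨hg.1.1, (not_lt.1 hg.2).trans (le_abs_self _)⟩
    exact ⟨range e, range_subset_iff.2 heF,
      nearSets_range_mem_gamma (fun j => hsub _ (heF j)) (fun j => hfar _ (heF j)) hnear⟩

theorem exists_near_of_upperDenseIn [T1Space X] [Infinite X] {S : Set (X → ℝ)}
    (hS : UpperDenseIn S (USCb X)) {h : X → ℝ} (hh : h ∈ USCb X) {K : Set X} (hK : K.Finite)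
    {δ : ℝ} (hδ : 0 < δ) :
    ∃ g, (g ∈ S ∧ h ≤ g ∧ g - h ∈ USCb X ∧ g ≠ h) ∧ ∀ x ∈ K, g x - h x < δ := by
  obtain ⟨x₀, hx₀⟩ := hK.infinite_compl.nonempty
  -- raising `h` at a point outside `K` keeps the approximants away from `h` itself
  set p := h + ({x₀} : Set X).indicator (fun _ => δ)
  have hp : p ∈ USCb X := add_mem_USCb hh (indicator_const_mem_USCb isClosed_singleton hδ.le)
  have hhp : h ≤ p := le_add_of_nonneg_right (Set.indicator_nonneg fun _ _ => hδ.le)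
  obtain ⟨g, ⟨hgS, hhg, hgh⟩, hgp⟩ :=
    mem_closure_iff_forall_finite.1 (hS.2 h hh ⟨hp, hhp⟩) (insert x₀ K) (hK.insert x₀) δ hδ
  refine ⟨g, ⟨hgS, hhg, hgh, fun hgh' => ?_⟩, fun x hx => ?_⟩
  · have := (abs_lt.1 (hgp x₀ (mem_insert _ _))).1
    simp [p, hgh'] at this
  · have hxx₀ : x ≠ x₀ := fun hxx₀ => hx₀ (hxx₀ ▸ hx)
    simpa [p, hxx₀] using (abs_lt.1 (hgp x (mem_insert_of_mem _ hx))).2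

theorem exists_seq_near_of_upperSeqDenseIn [Nonempty X] {S : Set (X → ℝ)}
    (hS : UpperSeqDenseIn S (USCb X)) {h : X → ℝ} (hh : h ∈ USCb X) {δ : ℝ} (hδ : 0 < δ) :
    ∃ v : ℕ → X → ℝ, (∀ j, v j ∈ S ∧ h ≤ v j ∧ v j - h ∈ USCb X ∧ v j ≠ h) ∧
      ∀ x, ∀ᶠ j in atTop, v j x - h x < δ := by
  set c : X → ℝ := fun _ => δ / 2
  obtain ⟨v, hv, hlim⟩ := hS.2 (h + c) (add_mem_USCb hh (const_mem_USCb _))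
  have hhv : ∀ j, h + c ≤ v j := fun j => (hv j).2.1
  refine ⟨v, fun j => ⟨(hv j).1, (le_add_of_nonneg_right fun _ => by positivity).trans (hhv j),
    ?_, fun hvh => ?_⟩, fun x => ?_⟩
  · rw [show v j - h = (v j - (h + c)) + c by abel]
    exact add_mem_USCb (hv j).2.2 (const_mem_USCb _)
  · obtain ⟨x⟩ := ‹Nonempty X›
    have := hhv j x
    simp [hvh, c] at this
    linarith
  · filter_upwards [(tendsto_pi_nhds.1 hlim x).eventually_lt_const
      (show (h + c) x < h x + δ by simp [c]; linarith)] with j hj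
    linarith

theorem nearCoverable_of_mem_upTilde [T1Space X] [Infinite X] {Φ : CoverKind}
    (hΦ : Φ = CoverKind.omega ∨ Φ = CoverKind.gamma) {S : Set (X → ℝ)}
    (hS : S ∈ upTilde Φ (USCb X)) {h : X → ℝ} (hh : h ∈ USCb X) :
    NearCoverable Φ h {g | g ∈ S ∧ h ≤ g ∧ g - h ∈ USCb X ∧ g ≠ h} := by
  rcases hΦ with rfl | rfl
  · obtain ⟨g, hg, -⟩ := exists_near_of_upperDenseIn hS hh finite_empty one_pos
    refine ⟨⟨g, hg⟩, fun δ hδ hfar => ⟨_, subset_rfl,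
      nearSets_mem_omega (fun g hg => hg.2.2.1) hfar fun K hK => ?_⟩⟩
    exact exists_near_of_upperDenseIn hS hh hK hδ
  · obtain ⟨v, hv, -⟩ := exists_seq_near_of_upperSeqDenseIn hS hh one_pos
    refine ⟨⟨v 0, hv 0⟩, fun δ hδ hfar => ?_⟩
    obtain ⟨v, hv, hnear⟩ := exists_seq_near_of_upperSeqDenseIn hS hh hδ
    exact ⟨range v, range_subset_iff.2 hv,
      nearSets_range_mem_gamma (fun j => (hv j).2.2.1) (fun j => hfar _ (hv j)) hnear⟩

end Selection

section Implications

variable [TopologicalSpace X]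

theorem separableSet_of_S1_dense [T1Space X] {Φ : CoverKind}
    (hΦ : Φ = CoverKind.omega ∨ Φ = CoverKind.gamma)
    (ha : S1 (upTilde Φ (USCb X)) (Dfam (USCb X))) : SeparableSet (USCb X) := by
  obtain ⟨f, -, hf⟩ := ha (fun _ => USCb X) fun _ => USCb_mem_upTilde hΦ
  exact ⟨range f, countable_range f, hf⟩

theorem S1_covers_of_S1_dense [T1Space X] {Φ : CoverKind}
    (hΦ : Φ = CoverKind.omega ∨ Φ = CoverKind.gamma)
    (ha : S1 (upTilde Φ (USCb X)) (Dfam (USCb X))) :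
    S1 (OpenKindCovers X Φ) (OpenKindCovers X .omega) := by
  intro u hu
  have hV := fun n => diff_univ_mem_openKindCovers hΦ (hu n)
  obtain ⟨f, hfSU, -, hdense⟩ := ha _ fun n => SU_mem_upTilde hΦ (hV n)
  choose U hU g hg hfg using hfSU
  refine ⟨U, fun n => (hU n).1, range_mem_omega_of_zero_mem_closure
    (fun n => (hV n).1 _ (hU n)) (fun n => (hU n).2) hg ?_⟩
  rw [show (fun n => fU (U n) (g n) + g n) = f from funext fun n => (hfg n).symm]
  exact hdense zero_mem_USCb

theorem S1_PhiH_of_S1_covers {Φ : CoverKind} (hΦ : Φ = CoverKind.omega ∨ Φ = CoverKind.gamma)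
    (hS1 : S1 (OpenKindCovers X Φ) (OpenKindCovers X .omega)) (h : X → ℝ) :
    S1 (PhiH Φ h (USCb X)) (PhiH .omega h (USCb X)) := by
  intro u hu
  obtain ⟨f, hfT, hcl⟩ := exists_select_mem_closure hS1 (T := fun n => u n \ {h})
    (fun n g hg => ((hu n).2.2 g hg.1).1) fun n => nearCoverable_diff_of_mem_PhiH hΦ (hu n)
  refine ⟨f, fun n => (hfT n).1, ?_, ⟨fun ⟨n, hn⟩ => (hfT n).2 hn, hcl⟩, ?_⟩
  · rintro _ ⟨n, rfl⟩
    exact (hu n).1 (hfT n).1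
  · rintro _ ⟨n, rfl⟩
    exact (hu n).2.2 _ (hfT n).1

theorem image_fU_zero_mem_PhiH {Φ : CoverKind}
    (hΦ : Φ = CoverKind.omega ∨ Φ = CoverKind.gamma) {𝒰 : Set (Set X)}
    (h𝒰 : 𝒰 ∈ OpenKindCovers X Φ) : (fun U => fU U 0) '' 𝒰 ∈ PhiH Φ 0 (USCb X) := by
  have hmem : ∀ U ∈ 𝒰, fU U 0 ∈ USCb X := fun U hU => fU_mem_USCb (h𝒰.1 U hU) 0
  refine ⟨forall_mem_image.2 hmem, ?_,
    forall_mem_image.2 fun U hU => ⟨fU_nonneg U 0, by simpa using hmem U hU⟩⟩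
  rcases hΦ with rfl | rfl
  · obtain ⟨-, -, huniv, hfin⟩ := h𝒰
    refine ⟨fun ⟨U, hU, h0⟩ => huniv ?_, mem_closure_iff_forall_finite.2 fun K hK ε hε => ?_⟩
    · rwa [← eq_univ_of_forall fun x => fU_zero_eq_zero_iff.1 (congrFun h0 x)]
    · obtain ⟨U, hU, hKU⟩ := hfin K hK
      exact ⟨_, mem_image_of_mem _ hU, fun x hx => by simp [fU_of_mem (hKU hx), hε]⟩
  · obtain ⟨-, -, hinf, hfin⟩ := h𝒰
    refine ⟨hinf.image fun U _ V _ hUV => ?_,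
      fun ε hε x => ((hfin x).image fun U => fU U 0).subset ?_⟩
    · ext x
      rw [← fU_zero_eq_zero_iff, hUV, fU_zero_eq_zero_iff]
    · rintro _ ⟨⟨U, hU, rfl⟩, hεU⟩
      refine ⟨U, ⟨hU, fun hxU => ?_⟩, rfl⟩
      simp [fU_of_mem hxU] at hεU
      linarith

theorem S1_covers_of_S1_PhiH_zero {Φ : CoverKind}
    (hΦ : Φ = CoverKind.omega ∨ Φ = CoverKind.gamma)
    (hc : S1 (PhiH Φ 0 (USCb X)) (PhiH .omega 0 (USCb X))) :
    S1 (OpenKindCovers X Φ) (OpenKindCovers X .omega) := by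
  intro u hu
  obtain ⟨f, hfu, -, ⟨h0f, h0cl⟩, -⟩ := hc _ fun n => image_fU_zero_mem_PhiH hΦ (hu n)
  choose U hU hfU using hfu
  refine ⟨U, hU, range_mem_omega_of_zero_mem_closure (g := fun _ => 0)
    (fun n => (hu n).1 _ (hU n)) (fun n hn => h0f ⟨n, ?_⟩) (fun _ => zero_mem_USCb) ?_⟩
  · ext x
    simp [← hfU n, hn, fU_of_mem (mem_univ x)]
  · simpa [hfU] using h0cl

theorem S1_upTilde_PropOmega_of_S1_covers [T1Space X] [Infinite X] {Φ : CoverKind}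
    (hΦ : Φ = CoverKind.omega ∨ Φ = CoverKind.gamma)
    (hS1 : S1 (OpenKindCovers X Φ) (OpenKindCovers X .omega)) {h : X → ℝ}
    (hh : h ∈ USCb X) : S1 (upTilde Φ (USCb X)) {F | PropOmega h F} := by
  intro S hS
  obtain ⟨f, hfT, hcl⟩ := exists_select_mem_closure hS1
    (T := fun n => {g | g ∈ S n ∧ h ≤ g ∧ g - h ∈ USCb X ∧ g ≠ h}) (fun n g hg => hg.2.1)
    fun n => nearCoverable_of_mem_upTilde hΦ (hS n) hh
  exact ⟨f, fun n => (hfT n).1, fun ⟨n, hn⟩ => (hfT n).2.2.2 hn, hcl⟩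

theorem S1_dense_of_forall_S1_PropOmega {Φ : CoverKind} (hsep : SeparableSet (USCb X))
    (hd : ∀ h ∈ USCb X, S1 (upTilde Φ (USCb X)) {F | PropOmega h F}) :
    S1 (upTilde Φ (USCb X)) (Dfam (USCb X)) := by
  obtain ⟨D, hDc, hDH, hHD⟩ := hsep
  obtain ⟨e, rfl⟩ := hDc.exists_eq_range (closure_nonempty_iff.1 ⟨0, hHD zero_mem_USCb⟩)
  intro S hS
  obtain ⟨f, hfS, hf⟩ := exists_seq_forall_exists_subset_range (S := S)
    (P := fun m A => e m ∈ closure A) fun m =>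
      let ⟨f, hfS, hf⟩ := hd (e m) (hDH (mem_range_self m)) _ fun k => hS _
      ⟨f, hfS, hf.2⟩
  refine ⟨f, hfS, range_subset_iff.2 fun n => upTilde_subset (hS n) (hfS n),
    hHD.trans (closure_minimal ?_ isClosed_closure)⟩
  rintro _ ⟨m, rfl⟩
  obtain ⟨A, hA, hmA⟩ := hf m
  exact closure_mono hA hmA

end Implications

/-- For Φ ∈ {Ω, Γ} and X infinite Hausdorff, TFAE:
(a) USC*_p(X) satisfies S₁(Φ̃↑, 𝒟);
(b) USC*_p(X) is separable and X is an S₁(Φ,Ω)-space;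
(c) USC*_p(X) is separable and satisfies S₁(Φ_h,Ω_h) for every h ∈ USC*_p(X);
(d) USC*_p(X) is separable and satisfies S₁(Φ̃↑,Ω_h) for every h ∈ USC*_p(X). -/
theorem statement7 {X : Type*} [TopologicalSpace X] [T2Space X] [Infinite X]
    (Φ : CoverKind) (hΦ : Φ = CoverKind.omega ∨ Φ = CoverKind.gamma) :
    List.TFAE [
      S1 (upTilde Φ (USCb X)) (Dfam (USCb X)),
      SeparableSet (USCb X) ∧
        S1 (OpenKindCovers X Φ) (OpenKindCovers X CoverKind.omega),
      SeparableSet (USCb X) ∧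
        ∀ h ∈ USCb X, S1 (PhiH Φ h (USCb X)) (PhiH CoverKind.omega h (USCb X)),
      SeparableSet (USCb X) ∧
        ∀ h ∈ USCb X, S1 (upTilde Φ (USCb X)) {F | PropOmega h F}] := by
  tfae_have 1 → 2 := fun ha => ⟨separableSet_of_S1_dense hΦ ha, S1_covers_of_S1_dense hΦ ha⟩
  tfae_have 2 → 3 := fun hb => ⟨hb.1, fun h _ => S1_PhiH_of_S1_covers hΦ hb.2 h⟩
  tfae_have 3 → 2 := fun hc => ⟨hc.1, S1_covers_of_S1_PhiH_zero hΦ (hc.2 0 zero_mem_USCb)⟩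
  tfae_have 2 → 4 := fun hb => ⟨hb.1, fun _ hh => S1_upTilde_PropOmega_of_S1_covers hΦ hb.2 hh⟩
  tfae_have 4 → 1 := fun hd => S1_dense_of_forall_S1_PropOmega hd.1 hd.2
  tfae_finish

end Selectors
end

section
/- For every infinite Hausdorff topological space X, USC*_p(X) does not satisfy the selection principle S₁(𝒫, 𝒟): there exists a sequence ⟨Sₙ : n ∈ ω⟩ of pointwise dense subsets of USC*_p(X) such that no choice of fₙ ∈ Sₙ makes {fₙ : n ∈ ω} dense in USC*_p(X). -/
open Set Filter Topology

namespace Selectors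

variable {X : Type*}

/-!
The constant functions form a pointwise dense subset of `USC*_p(X)`, so a selector may be
forced to pick only constants. But the constant functions are closed in `ℝ^X`, while in a
`T₁` space with two points `x₀ ≠ x₁` the indicator of `{x₀}` is a bounded upper
semicontinuous function that is not constant.
-/

lemma isUSCb_of_upperSemicontinuous [TopologicalSpace X] {f : X → ℝ}
    (hf : UpperSemicontinuous f) (hbdd : ∃ M : ℝ, ∀ x, |f x| ≤ M) : IsUSCb f :=
  ⟨upperSemicontinuous_iff_isOpen_preimage.1 hf, hbdd⟩

lemma range_const_mem_Pfam_USCb [TopologicalSpace X] :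
    range (Function.const X) ∈ Pfam (USCb X) := by
  refine ⟨?_, fun x => dense_univ.mono fun y _ => ⟨Function.const X y, mem_range_self y, rfl⟩⟩
  rintro _ ⟨c, rfl⟩
  exact isUSCb_of_upperSemicontinuous upperSemicontinuous_const ⟨|c|, fun _ => le_rfl⟩

lemma indicator_singleton_mem_USCb [TopologicalSpace X] [T1Space X] (x₀ : X) :
    ({x₀} : Set X).indicator (fun _ => (1 : ℝ)) ∈ USCb X := by
  refine isUSCb_of_upperSemicontinuous (isClosed_singleton.upperSemicontinuous_indicator
    zero_le_one) ⟨1, fun x => ?_⟩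
  by_cases hx : x = x₀ <;> simp [hx]

lemma isClosed_setOf_forall_apply_eq {Y : Type*} [TopologicalSpace Y] [T2Space Y] :
    IsClosed {f : X → Y | ∀ x y, f x = f y} := by
  simp only [ofPred_forall]
  exact isClosed_iInter fun x => isClosed_iInter fun y =>
    isClosed_eq (continuous_apply x) (continuous_apply y)

/-- For every infinite Hausdorff space X, USC*_p(X) does not satisfy
S₁(𝒫, 𝒟). -/
theorem statement9 {X : Type*} [TopologicalSpace X] [T2Space X] [Infinite X] :
    ¬ S1 (Pfam (USCb X)) (Dfam (USCb X)) := by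
  intro hS1
  obtain ⟨sel, hsel, hdense⟩ := hS1 _ fun _ => range_const_mem_Pfam_USCb
  have hclosure : closure (range sel) ⊆ {f : X → ℝ | ∀ x y, f x = f y} := by
    refine closure_minimal ?_ isClosed_setOf_forall_apply_eq
    rintro _ ⟨n, rfl⟩
    obtain ⟨c, hc⟩ := hsel n
    simp [← hc]
  obtain ⟨x₀, x₁, hne⟩ := exists_pair_ne X
  have heq := hclosure (hdense.2 (indicator_singleton_mem_USCb x₀)) x₀ x₁
  simp [hne.symm] at heq

end Selectors
end
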